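/- Let |ψ^{AB}⟩ = Σ_i √ω_i |i⟩|β_i⟩ be a pure state on ℂ^d ⊗ ℂ^{d_B} with the A-marginal diagonal, and let |φ^{AB}⟩ = (1/√d) Σ_i |i⟩|β_i⟩ be the corresponding maximally entangled state. Let $(X) = Σ_n F_n X F_n† be a trace-preserving CP map (Σ_n F_n†F_n = I) on B. Then the average remotely created coherence satisfies C̄^{A|B}(|ψ⟩) ≤ (d/2) · E(|ψ⟩) · C̄^{A|B}(|φ⟩), where C̄^{A|B}(|χ⟩) := Σ_n p_n C_{l1}(tr_B[(I⊗F_n)|χ⟩⟨χ|(I⊗F_n)†]/p_n) with p_n the probability of outcome n, and E is the concurrence. -/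

import Mathlib

open Matrix Kronecker BigOperators Finset ComplexOrder

noncomputable def l1Coh {d : ℕ} (ρ : Matrix (Fin d) (Fin d) ℂ) : ℝ :=
  ∑ i, ∑ j, if i ≠ j then ‖ρ i j‖ else 0

noncomputable def ptraceB {dA dB : ℕ}
    (ρ : Matrix (Fin dA × Fin dB) (Fin dA × Fin dB) ℂ) : Matrix (Fin dA) (Fin dA) ℂ :=
  fun i k => ∑ j, ρ (i, j) (k, j)

/-- Unnormalized post-operation reduced state of A for Kraus operator `F` on B. -/
noncomputable def postA {dA dB : ℕ} (F : Matrix (Fin dB) (Fin dB) ℂ)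
    (χ : Fin dA × Fin dB → ℂ) : Matrix (Fin dA) (Fin dA) ℂ :=
  ptraceB (((1 : Matrix (Fin dA) (Fin dA) ℂ) ⊗ₖ F) * Matrix.vecMulVec χ (star χ) *
    ((1 : Matrix (Fin dA) (Fin dA) ℂ) ⊗ₖ F)ᴴ)

/-- Average remotely created coherence `C̄^{A|B}(χ) = Σ_n p_n C_{l1}(ρ^A_n)`,
the sum running over outcomes with `p_n > 0`. -/
noncomputable def avgRCC {dA dB : ℕ} {ι : Type*} [Fintype ι]
    (F : ι → Matrix (Fin dB) (Fin dB) ℂ) (χ : Fin dA × Fin dB → ℂ) : ℝ :=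
  ∑ n, if 0 < ((postA (F n) χ).trace).re then
      ((postA (F n) χ).trace).re *
        l1Coh (((((postA (F n) χ).trace).re : ℂ))⁻¹ • postA (F n) χ)
    else 0

/-- Concurrence `E(ψ) = √(2(1 − tr[(tr_B|ψ⟩⟨ψ|)²]))`. -/
noncomputable def concurrence {dA dB : ℕ} (ψ : Fin dA × Fin dB → ℂ) : ℝ :=
  Real.sqrt (2 * (1 - ((ptraceB (Matrix.vecMulVec ψ (star ψ)) *
      ptraceB (Matrix.vecMulVec ψ (star ψ))).trace).re))

/-! Write `B` for the matrix with rows `β i` and `Gₙ = B Fₙᵀ (B Fₙᵀ)ᴴ`. The unnormalized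
post-measurement states of A are `D Gₙ D` for `ψ`, with `D = diag √ω`, and `Gₙ / d` for `φ`, and in
`pₙ C_{l1}(ρₙ / pₙ)` the probability cancels (an outcome with `pₙ = 0` has `ρₙ = 0`). So both
averages are sums over `n` and `i ≠ k` of `|Gₙ i k|`, weighted by `√(ωᵢ ωₖ)` and by `1/d`
respectively, and `√(ωᵢ ωₖ) ≤ E/2` because `E² = 2 (1 - Σ ω²) = 2 Σ_{m ≠ n} ωₘ ωₙ ≥ 4 ωᵢ ωₖ`. -/

section

variable {dA dB : ℕ}

lemma ptraceB_vecMulVec_star (u : Fin dA × Fin dB → ℂ) :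
    ptraceB (vecMulVec u (star u)) = of (Function.curry u) * (of (Function.curry u))ᴴ := by
  ext i k
  simp [ptraceB, mul_apply, vecMulVec_apply]

lemma of_curry_one_kronecker_mulVec (F : Matrix (Fin dB) (Fin dB) ℂ) (χ : Fin dA × Fin dB → ℂ) :
    of (Function.curry ((1 ⊗ₖ F) *ᵥ χ)) = of (Function.curry χ) * Fᵀ := by
  ext i j
  simp [mulVec, dotProduct, mul_apply, one_apply, Fintype.sum_prod_type, mul_comm]

lemma postA_eq_mul_conjTranspose (F : Matrix (Fin dB) (Fin dB) ℂ) (χ : Fin dA × Fin dB → ℂ) :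
    postA F χ = of (Function.curry χ) * Fᵀ * (of (Function.curry χ) * Fᵀ)ᴴ := by
  rw [postA, mul_vecMulVec, vecMulVec_mul, ← star_mulVec, ptraceB_vecMulVec_star,
    of_curry_one_kronecker_mulVec]

lemma postA_eq_diagonal_mul_mul_diagonal (F : Matrix (Fin dB) (Fin dB) ℂ)
    {χ χ₀ : Fin dA × Fin dB → ℂ} {c : Fin dA → ℂ} (h : ∀ i j, χ (i, j) = c i * χ₀ (i, j)) :
    postA F χ = diagonal c * postA F χ₀ * diagonal (star c) := by
  have hχ : of (Function.curry χ) = diagonal c * of (Function.curry χ₀) := by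
    ext i j
    simp [h]
  simp only [postA_eq_mul_conjTranspose, hχ, conjTranspose_mul, diagonal_conjTranspose,
    Matrix.mul_assoc]

lemma postA_smul (F : Matrix (Fin dB) (Fin dB) ℂ) (a : ℂ) (χ : Fin dA × Fin dB → ℂ) :
    postA F (a • χ) = (star a * a) • postA F χ := by
  have hχ : of (Function.curry (a • χ)) = a • of (Function.curry χ) := rfl
  simp only [postA_eq_mul_conjTranspose, hχ, smul_mul, conjTranspose_smul, Matrix.mul_smul,
    smul_smul]

lemma postA_eq_zero_of_trace_re_nonpos (F : Matrix (Fin dB) (Fin dB) ℂ) (χ : Fin dA × Fin dB → ℂ)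
    (h : (postA F χ).trace.re ≤ 0) : postA F χ = 0 := by
  rw [postA_eq_mul_conjTranspose] at h ⊢
  set W := of (Function.curry χ) * Fᵀ
  have hnonneg := (posSemidef_self_mul_conjTranspose W).trace_nonneg
  have htrace : (W * Wᴴ).trace = 0 := by
    apply Complex.ext
    · exact le_antisymm h (Complex.nonneg_iff.1 hnonneg).1
    · exact (Complex.nonneg_iff.1 hnonneg).2.symm
  rw [trace_mul_conjTranspose_self_eq_zero_iff.1 htrace, Matrix.zero_mul]

lemma l1Coh_zero {d : ℕ} : l1Coh (0 : Matrix (Fin d) (Fin d) ℂ) = 0 := by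
  simp [l1Coh]

lemma l1Coh_smul {d : ℕ} (a : ℂ) (ρ : Matrix (Fin d) (Fin d) ℂ) :
    l1Coh (a • ρ) = ‖a‖ * l1Coh ρ := by
  simp [l1Coh, mul_sum, mul_ite]

lemma l1Coh_diagonal_mul_mul_diagonal_le {d : ℕ} {a b : Fin d → ℂ} {K : ℝ}
    (h : ∀ i k, i ≠ k → ‖a i‖ * ‖b k‖ ≤ K) (ρ : Matrix (Fin d) (Fin d) ℂ) :
    l1Coh (diagonal a * ρ * diagonal b) ≤ K * l1Coh ρ := by
  simp only [l1Coh, mul_sum, mul_ite, mul_zero]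
  gcongr with i _ k _
  split_ifs with hik
  · simp only [mul_diagonal, diagonal_mul, norm_mul]
    calc ‖a i‖ * ‖ρ i k‖ * ‖b k‖ = ‖a i‖ * ‖b k‖ * ‖ρ i k‖ := by ring
      _ ≤ K * ‖ρ i k‖ := by gcongr; exact h i k hik
  · rfl

lemma avgRCC_eq_sum_l1Coh {ι : Type*} [Fintype ι] (F : ι → Matrix (Fin dB) (Fin dB) ℂ)
    (χ : Fin dA × Fin dB → ℂ) : avgRCC F χ = ∑ n, l1Coh (postA (F n) χ) := by
  refine sum_congr rfl fun n _ => ?_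
  split_ifs with hp
  · rw [l1Coh_smul, norm_inv, Complex.norm_real, Real.norm_of_nonneg hp.le, ← mul_assoc,
      mul_inv_cancel₀ hp.ne', one_mul]
  · rw [postA_eq_zero_of_trace_re_nonpos _ _ (not_lt.1 hp), l1Coh_zero]

lemma concurrence_eq_of_schmidt {d : ℕ} {ω : Fin d → ℝ} (hω : ∀ i, 0 ≤ ω i)
    {β : Fin d → Fin dB → ℂ}
    (hβ : ∀ i k, ∑ j, (starRingEnd ℂ) (β i j) * β k j = if i = k then 1 else 0)
    {ψ : Fin d × Fin dB → ℂ} (hψ : ∀ i j, ψ (i, j) = (Real.sqrt (ω i) : ℂ) * β i j) :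
    concurrence ψ = Real.sqrt (2 * (1 - ∑ i, ω i ^ 2)) := by
  have hB : of β * (of β)ᴴ = 1 := by
    ext i k
    simpa [mul_apply, one_apply, mul_comm, eq_comm] using hβ k i
  have hψB : of (Function.curry ψ) = diagonal (fun i => (Real.sqrt (ω i) : ℂ)) * of β := by
    ext i j
    simp [hψ]
  have hρ : ptraceB (vecMulVec ψ (star ψ)) = diagonal (fun i => (ω i : ℂ)) := by
    rw [ptraceB_vecMulVec_star, hψB, conjTranspose_mul, diagonal_conjTranspose, Matrix.mul_assoc,
      ← Matrix.mul_assoc (of β), hB, Matrix.one_mul, diagonal_mul_diagonal]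
    congr 1
    ext i
    simp [← Complex.ofReal_mul, Real.mul_self_sqrt (hω i)]
  simp [concurrence, hρ, sq]

lemma two_mul_le_one_sub_sum_sq {ι : Type*} [Fintype ι] {ω : ι → ℝ} (hω : ∀ i, 0 ≤ ω i)
    (hsum : ∑ i, ω i = 1) {i k : ι} (hik : i ≠ k) : 2 * (ω i * ω k) ≤ 1 - ∑ m, ω m ^ 2 := by
  classical
  have hpair : ω i + ω k ≤ 1 := hsum ▸ by
    simpa [sum_pair hik] using
      sum_le_sum_of_subset_of_nonneg (subset_univ {i, k}) fun m _ _ => hω m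
  have hle : ∀ m, ω m ≤ 1 := fun m => hsum ▸ single_le_sum (fun m _ => hω m) (mem_univ m)
  calc 2 * (ω i * ω k) ≤ ω i * (1 - ω i) + ω k * (1 - ω k) := by nlinarith [hω i, hω k]
    _ ≤ ∑ m, ω m * (1 - ω m) := by
      simpa [sum_pair hik] using sum_le_sum_of_subset_of_nonneg (subset_univ {i, k})
        fun m _ _ => mul_nonneg (hω m) (sub_nonneg.2 (hle m))
    _ = 1 - ∑ m, ω m ^ 2 := by simp [mul_sub, sum_sub_distrib, hsum, sq]

lemma sqrt_mul_sqrt_le_half_sqrt {ι : Type*} [Fintype ι] {ω : ι → ℝ} (hω : ∀ i, 0 ≤ ω i)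
    (hsum : ∑ i, ω i = 1) {i k : ι} (hik : i ≠ k) :
    Real.sqrt (ω i) * Real.sqrt (ω k) ≤ Real.sqrt (2 * (1 - ∑ m, ω m ^ 2)) / 2 := by
  have h := two_mul_le_one_sub_sum_sq hω hsum hik
  have hωik := mul_nonneg (hω i) (hω k)
  rw [← Real.sqrt_mul (hω i), le_div_iff₀ two_pos, Real.le_sqrt (by positivity) (by linarith),
    mul_pow, Real.sq_sqrt hωik]
  linarith

end

theorem avg_RCC_upper_bound_general
    {d dB : ℕ} {ι : Type*} [Fintype ι]
    (ω : Fin d → ℝ) (hω : ∀ i, 0 ≤ ω i) (hωsum : ∑ i, ω i = 1)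
    (β : Fin d → Fin dB → ℂ)
    (hβ : ∀ i k, ∑ j, (starRingEnd ℂ) (β i j) * β k j = if i = k then 1 else 0)
    (ψ φ : Fin d × Fin dB → ℂ)
    (hψ : ∀ i j, ψ (i, j) = (Real.sqrt (ω i) : ℂ) * β i j)
    (hφ : ∀ i j, φ (i, j) = ((Real.sqrt d : ℝ) : ℂ)⁻¹ * β i j)
    (F : ι → Matrix (Fin dB) (Fin dB) ℂ) :
    avgRCC F ψ ≤ ((d : ℝ) / 2) * concurrence ψ * avgRCC F φ := by
  have hd : (d : ℝ) ≠ 0 := by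
    rintro h
    obtain rfl : d = 0 := by exact_mod_cast h
    simp at hωsum
  set χ₀ : Fin d × Fin dB → ℂ := fun p => β p.1 p.2
  set G : ι → ℝ := fun n => l1Coh (postA (F n) χ₀)
  have hψ_le : avgRCC F ψ ≤ concurrence ψ / 2 * ∑ n, G n := by
    rw [avgRCC_eq_sum_l1Coh, mul_sum]
    gcongr with n
    rw [postA_eq_diagonal_mul_mul_diagonal (F n) (χ₀ := χ₀) hψ]
    refine l1Coh_diagonal_mul_mul_diagonal_le (fun i k hik => ?_) _
    simpa [concurrence_eq_of_schmidt hω hβ hψ, Real.sqrt_nonneg, abs_of_nonneg] using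
      sqrt_mul_sqrt_le_half_sqrt hω hωsum hik
  have hφ_eq : avgRCC F φ = (d : ℝ)⁻¹ * ∑ n, G n := by
    have : φ = ((Real.sqrt d : ℝ) : ℂ)⁻¹ • χ₀ := funext fun p => hφ p.1 p.2
    have hnorm : ‖star ((Real.sqrt d : ℂ))⁻¹ * ((Real.sqrt d : ℂ))⁻¹‖ = (d : ℝ)⁻¹ := by
      simp only [norm_mul, norm_star, norm_inv, Complex.norm_real,
        Real.norm_of_nonneg (Real.sqrt_nonneg _), ← mul_inv, Real.mul_self_sqrt (Nat.cast_nonneg d)]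
    simp only [avgRCC_eq_sum_l1Coh, this, postA_smul, l1Coh_smul, hnorm, mul_sum, G]
  rw [hφ_eq]
  field_simp
  linarith

/-- Theorem 3: `C̄^{A|B}(ψ) ≤ (d/2) E(ψ) C̄^{A|B}(φ)` for a trace-preserving channel on B. -/
theorem avg_RCC_upper_bound
    {d dB : ℕ} {ι : Type*} [Fintype ι]
    (ω : Fin d → ℝ) (hω : ∀ i, 0 ≤ ω i) (hωsum : ∑ i, ω i = 1)
    (β : Fin d → Fin dB → ℂ)
    (hβ : ∀ i k, ∑ j, (starRingEnd ℂ) (β i j) * β k j = if i = k then 1 else 0)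
    (ψ φ : Fin d × Fin dB → ℂ)
    (hψ : ∀ i j, ψ (i, j) = (Real.sqrt (ω i) : ℂ) * β i j)
    (hφ : ∀ i j, φ (i, j) = ((Real.sqrt d : ℝ) : ℂ)⁻¹ * β i j)
    (F : ι → Matrix (Fin dB) (Fin dB) ℂ)
    (htp : ∑ n, (F n)ᴴ * (F n) = (1 : Matrix (Fin dB) (Fin dB) ℂ)) :
    avgRCC F ψ ≤ ((d : ℝ) / 2) * concurrence ψ * avgRCC F φ :=
  avg_RCC_upper_bound_general ω hω hωsum β hβ ψ φ hψ hφ F
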